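/- Let Ω ⊆ ℝⁿ satisfy the ε-ball condition, choose the local frame at x₀ ∈ ∂Ω, and set r = (√3/2)ε. Then there is a single function φ : D_r(0') → (−ε, ε) with φ(0') = 0 such that ∂Ω ∩ (D_r(0') × (−ε, ε)) = {(x', φ(x')) : x' ∈ D_r(0')} and Ω ∩ (D_r(0') × (−ε, ε)) = {(x', x_n) : x' ∈ D_r(0'), −ε < x_n < φ(x')}. -/

import Mathlib

/-!
Write `L s = x₀ + v + s • d₀` for the vertical line through `x₀ + v`. By Pythagoras it meets the
inner and outer balls at `x₀` in the intervals of half-length `s₀ = √(ε² - ‖v‖²) > ε / 2` around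
`∓ε`, so every boundary point `L t` with `|t| < ε` has `|t| ≤ ε - s₀`. Comparing the balls at `x₀`
and at `L t` by the parallelogram law shows that the normal `d` at `L t` satisfies
`ε ⟪d₀, d⟫ ≥ s₀`, so the balls at `L t` contain `L s` for `0 < ±(s - t) < 2 s₀`; together with the
balls at `x₀` this puts all of `L (t, ε)` outside `closure Ω` and all of `L (-ε, t)` inside `Ω`.
Hence the line crosses `∂Ω` exactly once, and it does cross by connectedness.
-/

open Metric Set
open scoped RealInnerProductSpace

theorem IsPreconnected.inter_frontier_nonempty {X : Type*} [TopologicalSpace X] {s t : Set X}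
    (hs : IsPreconnected s) (hst : (s ∩ t).Nonempty) (hst' : (s \ t).Nonempty) :
    (s ∩ frontier t).Nonempty := by
  by_contra h
  have hcover : s ⊆ interior t ∪ (closure t)ᶜ := fun x hx => by
    by_contra hx'
    simp only [mem_union, mem_compl_iff, not_or, not_not] at hx'
    exact h ⟨x, hx, hx'.2, hx'.1⟩
  rcases hs.subset_or_subset isOpen_interior isClosed_closure.isOpen_compl
    (disjoint_compl_right.mono_left interior_subset_closure) hcover with hsub | hsub
  · obtain ⟨x, hxs, hxt⟩ := hst'
    exact hxt (interior_subset (hsub hxs))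
  · obtain ⟨x, hxs, hxt⟩ := hst
    exact hsub hxs (subset_closure hxt)

variable {E : Type*} [NormedAddCommGroup E] [InnerProductSpace ℝ E]

theorem add_smul_mem_ball_add_smul {ε h : ℝ} {x u d : E} (hε : 0 < ε) (hu : ‖u‖ = 1)
    (hd : ‖d‖ = 1) (h0 : 0 < h) (hh : h < 2 * ε * ⟪u, d⟫) : x + h • u ∈ ball (x + ε • d) ε := by
  rw [mem_ball, dist_eq_norm, add_sub_add_left_eq_sub, ← sq_lt_sq₀ (norm_nonneg _) hε.le,
    norm_sub_sq_real, inner_smul_left, inner_smul_right, norm_smul, norm_smul, hu, hd,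
    Real.norm_eq_abs, Real.norm_eq_abs, mul_one, mul_one, sq_abs, sq_abs]
  simp only [conj_trivial]
  nlinarith

def IsBallNormal (Ω : Set E) (ε : ℝ) (x d : E) : Prop :=
  ‖d‖ = 1 ∧ ball (x - ε • d) ε ⊆ Ω ∧ ball (x + ε • d) ε ⊆ (closure Ω)ᶜ

namespace IsBallNormal

variable {Ω : Set E} {ε h : ℝ} {x y d e u : E}

theorem notMem_ball_of_mem_frontier (hx : IsBallNormal Ω ε x d) {p : E} (hp : p ∈ frontier Ω) :
    p ∉ ball (x - ε • d) ε ∧ p ∉ ball (x + ε • d) ε :=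
  ⟨fun hb => hp.2 (interior_maximal hx.2.1 isOpen_ball hb), fun hb => hx.2.2 hb hp.1⟩

theorem disjoint_ball (hx : IsBallNormal Ω ε x d) (hy : IsBallNormal Ω ε y e) :
    Disjoint (ball (x - ε • d) ε) (ball (y + ε • e) ε) :=
  Set.disjoint_left.2 fun _ hz hz' => hy.2.2 hz' (subset_closure (hx.2.1 hz))

/-- The inner ball at each point misses the outer ball at the other; the parallelogram law turns
these two distance bounds into a lower bound on `⟪d, e⟫`. -/
theorem two_mul_sq_sub_norm_sub_sq_le_inner (hε : 0 < ε) (hx : IsBallNormal Ω ε x d)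
    (hy : IsBallNormal Ω ε y e) : 2 * ε ^ 2 - ‖y - x‖ ^ 2 ≤ 2 * ε ^ 2 * ⟪d, e⟫ := by
  have h₁ : ε + ε ≤ ‖(y - x) + ε • (d + e)‖ := by
    have := (disjoint_ball_ball_iff hε hε).1 (hx.disjoint_ball hy)
    rwa [dist_comm, dist_eq_norm, show y + ε • e - (x - ε • d) = (y - x) + ε • (d + e) by
      module] at this
  have h₂ : ε + ε ≤ ‖(y - x) - ε • (d + e)‖ := by
    have := (disjoint_ball_ball_iff hε hε).1 (hy.disjoint_ball hx)
    rwa [dist_eq_norm, show y - ε • e - (x + ε • d) = (y - x) - ε • (d + e) by module] at this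
  have hde : ‖ε • (d + e)‖ ^ 2 = ε ^ 2 * (2 + 2 * ⟪d, e⟫) := by
    rw [norm_smul, mul_pow, Real.norm_eq_abs, sq_abs, norm_add_sq_real, hx.1, hy.1]
    ring
  nlinarith [parallelogram_law_with_norm ℝ (y - x) (ε • (d + e)),
    norm_nonneg ((y - x) + ε • (d + e)), norm_nonneg ((y - x) - ε • (d + e))]

theorem add_smul_notMem_closure (hε : 0 < ε) (hx : IsBallNormal Ω ε x d) (hu : ‖u‖ = 1)
    (h0 : 0 < h) (hh : h < 2 * ε * ⟪u, d⟫) : x + h • u ∉ closure Ω :=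
  hx.2.2 (add_smul_mem_ball_add_smul hε hu hx.1 h0 hh)

theorem sub_smul_mem (hε : 0 < ε) (hx : IsBallNormal Ω ε x d) (hu : ‖u‖ = 1)
    (h0 : 0 < h) (hh : h < 2 * ε * ⟪u, d⟫) : x - h • u ∈ Ω := by
  have := add_smul_mem_ball_add_smul (x := x) hε (u := -u) (d := -d) (by rwa [norm_neg])
    (by rw [norm_neg, hx.1]) h0 (by rwa [inner_neg_neg])
  rw [smul_neg, smul_neg, ← sub_eq_add_neg, ← sub_eq_add_neg] at this
  exact hx.2.1 this

end IsBallNormal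

section Line

variable {Ω : Set E} {ε s₀ t : ℝ} {x₀ d₀ v : E}

theorem norm_add_smul_sq_of_inner_eq_zero (hd₀ : ‖d₀‖ = 1) (hv : ⟪v, d₀⟫ = 0) (t : ℝ) :
    ‖v + t • d₀‖ ^ 2 = ‖v‖ ^ 2 + t ^ 2 := by
  rw [norm_add_sq_real, inner_smul_right, hv, norm_smul, hd₀, Real.norm_eq_abs, mul_one, sq_abs]
  ring

theorem add_add_smul_mem_ball_iff (hε : 0 < ε) (hs₀ : 0 ≤ s₀)
    (hline : ∀ τ : ℝ, ‖v + τ • d₀‖ ^ 2 = ε ^ 2 - s₀ ^ 2 + τ ^ 2) (t c : ℝ) :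
    x₀ + v + t • d₀ ∈ ball (x₀ + c • d₀) ε ↔ |t - c| < s₀ := by
  rw [mem_ball, dist_eq_norm, show x₀ + v + t • d₀ - (x₀ + c • d₀) = v + (t - c) • d₀ by module,
    ← sq_lt_sq₀ (norm_nonneg _) hε.le, hline, ← abs_of_nonneg hs₀, ← sq_lt_sq, abs_of_nonneg hs₀]
  constructor <;> intro h <;> linarith

theorem abs_le_of_mem_frontier (hε : 0 < ε) (hx₀ : IsBallNormal Ω ε x₀ d₀) (hs₀ : 0 ≤ s₀)
    (hline : ∀ τ : ℝ, ‖v + τ • d₀‖ ^ 2 = ε ^ 2 - s₀ ^ 2 + τ ^ 2) (ht : t ∈ Ioo (-ε) ε)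
    (hp : x₀ + v + t • d₀ ∈ frontier Ω) : |t| ≤ ε - s₀ := by
  obtain ⟨hin, hout⟩ := hx₀.notMem_ball_of_mem_frontier hp
  rw [sub_eq_add_neg, ← neg_smul, add_add_smul_mem_ball_iff hε hs₀ hline, not_lt,
    sub_neg_eq_add, abs_of_pos (by linarith [ht.1])] at hin
  rw [add_add_smul_mem_ball_iff hε hs₀ hline, not_lt, abs_of_neg (by linarith [ht.2])] at hout
  exact abs_le.2 ⟨by linarith, by linarith⟩

theorem le_mul_inner_of_abs_le (hε : 0 < ε) (hx₀ : IsBallNormal Ω ε x₀ d₀) {d : E}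
    (hline : ∀ τ : ℝ, ‖v + τ • d₀‖ ^ 2 = ε ^ 2 - s₀ ^ 2 + τ ^ 2)
    (hp : IsBallNormal Ω ε (x₀ + v + t • d₀) d) (ht : |t| ≤ ε - s₀) : s₀ ≤ ε * ⟪d₀, d⟫ := by
  have key := hx₀.two_mul_sq_sub_norm_sub_sq_le_inner hε hp
  rw [add_assoc, add_sub_cancel_left, hline] at key
  have ht2 : t ^ 2 ≤ (ε - s₀) ^ 2 := sq_le_sq' (abs_le.1 ht).1 (abs_le.1 ht).2
  nlinarith

theorem add_add_smul_notMem_closure_of_lt (hε : 0 < ε) (hx₀ : IsBallNormal Ω ε x₀ d₀)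
    (hs₀ : ε < 2 * s₀) (hline : ∀ τ : ℝ, ‖v + τ • d₀‖ ^ 2 = ε ^ 2 - s₀ ^ 2 + τ ^ 2) {d : E}
    (hp : IsBallNormal Ω ε (x₀ + v + t • d₀) d) (hpd : s₀ ≤ ε * ⟪d₀, d⟫) (ht : -(ε - s₀) ≤ t)
    {s : ℝ} (hts : t < s) (hs : s < ε) : x₀ + v + s • d₀ ∉ closure Ω := by
  by_cases hnear : s - t < 2 * s₀
  · rw [show x₀ + v + s • d₀ = x₀ + v + t • d₀ + (s - t) • d₀ by module]
    exact hp.add_smul_notMem_closure hε hx₀.1 (sub_pos.2 hts) (by linarith)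
  · refine hx₀.2.2 ((add_add_smul_mem_ball_iff hε (by linarith) hline s ε).2 ?_)
    exact abs_lt.2 ⟨by linarith, by linarith⟩

theorem add_add_smul_mem_of_lt (hε : 0 < ε) (hx₀ : IsBallNormal Ω ε x₀ d₀)
    (hs₀ : ε < 2 * s₀) (hline : ∀ τ : ℝ, ‖v + τ • d₀‖ ^ 2 = ε ^ 2 - s₀ ^ 2 + τ ^ 2) {d : E}
    (hp : IsBallNormal Ω ε (x₀ + v + t • d₀) d) (hpd : s₀ ≤ ε * ⟪d₀, d⟫) (ht : t ≤ ε - s₀)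
    {s : ℝ} (hst : s < t) (hs : -ε < s) : x₀ + v + s • d₀ ∈ Ω := by
  by_cases hnear : t - s < 2 * s₀
  · rw [show x₀ + v + s • d₀ = x₀ + v + t • d₀ - (t - s) • d₀ by module]
    exact hp.sub_smul_mem hε hx₀.1 (sub_pos.2 hst) (by linarith)
  · refine hx₀.2.1 ?_
    rw [sub_eq_add_neg, ← neg_smul, add_add_smul_mem_ball_iff hε (by linarith) hline]
    exact abs_lt.2 ⟨by linarith, by linarith⟩

theorem exists_frontier_graph_on_line (hε : 0 < ε) (hΩ : IsOpen Ω)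
    (hball : ∀ x ∈ frontier Ω, ∃ d : E, IsBallNormal Ω ε x d) (hx₀ : IsBallNormal Ω ε x₀ d₀)
    (hs₀ : ε < 2 * s₀) (hline : ∀ τ : ℝ, ‖v + τ • d₀‖ ^ 2 = ε ^ 2 - s₀ ^ 2 + τ ^ 2) :
    ∃ T ∈ Ioo (-ε) ε, ∀ s ∈ Ioo (-ε) ε,
      (x₀ + v + s • d₀ ∈ frontier Ω ↔ s = T) ∧ (x₀ + v + s • d₀ ∈ Ω ↔ s < T) := by
  set L : ℝ → E := fun s => x₀ + v + s • d₀
  have hs₀ε : s₀ ≤ ε := by nlinarith [hline 0, norm_nonneg v]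
  have hmem : L (-ε + s₀ / 2) ∈ Ω := by
    refine hx₀.2.1 ?_
    rw [sub_eq_add_neg, ← neg_smul, add_add_smul_mem_ball_iff hε (by linarith) hline]
    exact abs_lt.2 ⟨by linarith, by linarith⟩
  have hnotMem : L (ε - s₀ / 2) ∉ closure Ω := by
    refine hx₀.2.2 ((add_add_smul_mem_ball_iff hε (by linarith) hline _ _).2 ?_)
    exact abs_lt.2 ⟨by linarith, by linarith⟩
  obtain ⟨_, ⟨T, hT, rfl⟩, hTf⟩ :=
    (isPreconnected_Ioo.image L (by fun_prop)).inter_frontier_nonempty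
      ⟨_, mem_image_of_mem L (⟨by linarith, by linarith⟩ : -ε + s₀ / 2 ∈ Ioo (-ε) ε), hmem⟩
      ⟨_, mem_image_of_mem L (⟨by linarith, by linarith⟩ : ε - s₀ / 2 ∈ Ioo (-ε) ε),
        fun h => hnotMem (subset_closure h)⟩
  obtain ⟨d, hd⟩ := hball _ hTf
  have hTabs := abs_le_of_mem_frontier hε hx₀ (by linarith) hline hT hTf
  have hTd := le_mul_inner_of_abs_le hε hx₀ hline hd hTabs
  rw [hΩ.frontier_eq] at hTf ⊢
  refine ⟨T, hT, fun s hs => ?_⟩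
  rcases lt_trichotomy s T with hsT | rfl | hsT
  · have h := add_add_smul_mem_of_lt hε hx₀ hs₀ hline hd hTd (abs_le.1 hTabs).2 hsT hs.1
    exact ⟨iff_of_false (fun hf => hf.2 h) hsT.ne, iff_of_true h hsT⟩
  · exact ⟨iff_of_true hTf rfl, iff_of_false hTf.2 (lt_irrefl s)⟩
  · have h := add_add_smul_notMem_closure_of_lt hε hx₀ hs₀ hline hd hTd (abs_le.1 hTabs).1 hsT
      hs.2
    exact ⟨iff_of_false (fun hf => h hf.1) hsT.ne', iff_of_false (fun hm => h (subset_closure hm))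
      (not_lt.2 hsT.le)⟩

end Line

theorem lt_two_mul_sqrt_sq_sub_sq {ε a : ℝ} (ha : 0 ≤ a) (h : a < √3 / 2 * ε) :
    ε < 2 * √(ε ^ 2 - a ^ 2) := by
  have h3 : √3 ^ 2 = 3 := Real.sq_sqrt (by norm_num)
  have hε : 0 < ε := by nlinarith [Real.sqrt_nonneg 3]
  have ha2 : a ^ 2 < 3 / 4 * ε ^ 2 := by nlinarith
  have := (Real.lt_sqrt (by linarith : 0 ≤ ε / 2)).2 (by nlinarith : (ε / 2) ^ 2 < ε ^ 2 - a ^ 2)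
  linarith

theorem stmt_11_general {n : ℕ} (ε : ℝ) (hε : 0 < ε)
    (Ω : Set (EuclideanSpace ℝ (Fin n))) (hΩ : IsOpen Ω)
    (hball : ∀ x ∈ frontier Ω, ∃ d : EuclideanSpace ℝ (Fin n), ‖d‖ = 1 ∧
      ball (x - ε • d) ε ⊆ Ω ∧ ball (x + ε • d) ε ⊆ (closure Ω)ᶜ)
    (x₀ : EuclideanSpace ℝ (Fin n)) (hx₀ : x₀ ∈ frontier Ω)
    (d₀ : EuclideanSpace ℝ (Fin n)) (hd₀ : ‖d₀‖ = 1)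
    (h1 : ball (x₀ - ε • d₀) ε ⊆ Ω) (h2 : ball (x₀ + ε • d₀) ε ⊆ (closure Ω)ᶜ) :
    ∃ φ : EuclideanSpace ℝ (Fin n) → ℝ, φ 0 = 0 ∧
      ∀ v : EuclideanSpace ℝ (Fin n), ⟪v, d₀⟫ = 0 → ‖v‖ < Real.sqrt 3 / 2 * ε →
        φ v ∈ Set.Ioo (-ε) ε ∧
        ∀ t ∈ Set.Ioo (-ε) ε,
          (x₀ + v + t • d₀ ∈ frontier Ω ↔ t = φ v) ∧
          (x₀ + v + t • d₀ ∈ Ω ↔ t < φ v) := by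
  have hgraph : ∀ v : EuclideanSpace ℝ (Fin n), ∃ T : ℝ,
      ⟪v, d₀⟫ = 0 → ‖v‖ < Real.sqrt 3 / 2 * ε → T ∈ Set.Ioo (-ε) ε ∧
        ∀ t ∈ Set.Ioo (-ε) ε,
          (x₀ + v + t • d₀ ∈ frontier Ω ↔ t = T) ∧ (x₀ + v + t • d₀ ∈ Ω ↔ t < T) := by
    intro v
    by_cases hv : ⟪v, d₀⟫ = 0 ∧ ‖v‖ < Real.sqrt 3 / 2 * ε
    · have hs₀ := lt_two_mul_sqrt_sq_sub_sq (norm_nonneg v) hv.2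
      have hs₀sq : √(ε ^ 2 - ‖v‖ ^ 2) ^ 2 = ε ^ 2 - ‖v‖ ^ 2 := Real.sq_sqrt <| by
        by_contra hneg
        rw [Real.sqrt_eq_zero'.2 (by linarith)] at hs₀
        linarith
      have hline (τ : ℝ) := norm_add_smul_sq_of_inner_eq_zero hd₀ hv.1 τ
      obtain ⟨T, hT, hTs⟩ := exists_frontier_graph_on_line hε hΩ hball ⟨hd₀, h1, h2⟩ hs₀
        (fun τ => by rw [hline, hs₀sq]; ring)
      exact ⟨T, fun _ _ => ⟨hT, hTs⟩⟩
    · exact ⟨0, fun h h' => (hv ⟨h, h'⟩).elim⟩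
  choose φ hφ using hgraph
  refine ⟨φ, ?_, hφ⟩
  have h0 := ((hφ 0 (inner_zero_left _) (by simpa using hε)).2 0 ⟨by linarith, hε⟩).1
  exact (h0.1 (by simpa using hx₀)).symm

/-- In the local frame at `x₀ ∈ ∂Ω` and with `r = (√3/2)ε`, there is a single function
`φ : D_r(0') → (−ε, ε)` with `φ(0') = 0` whose graph is `∂Ω` in the cylinder
`D_r(0') × (−ε, ε)` and below which lies `Ω`. -/
theorem stmt_11 {n : ℕ} (hn : 2 ≤ n) (ε : ℝ) (hε : 0 < ε)
    (Ω : Set (EuclideanSpace ℝ (Fin n))) (hΩ : IsOpen Ω)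
    (hball : ∀ x ∈ frontier Ω, ∃ d : EuclideanSpace ℝ (Fin n), ‖d‖ = 1 ∧
      ball (x - ε • d) ε ⊆ Ω ∧ ball (x + ε • d) ε ⊆ (closure Ω)ᶜ)
    (x₀ : EuclideanSpace ℝ (Fin n)) (hx₀ : x₀ ∈ frontier Ω)
    (d₀ : EuclideanSpace ℝ (Fin n)) (hd₀ : ‖d₀‖ = 1)
    (h1 : ball (x₀ - ε • d₀) ε ⊆ Ω) (h2 : ball (x₀ + ε • d₀) ε ⊆ (closure Ω)ᶜ) :
    ∃ φ : EuclideanSpace ℝ (Fin n) → ℝ, φ 0 = 0 ∧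
      ∀ v : EuclideanSpace ℝ (Fin n), ⟪v, d₀⟫ = 0 → ‖v‖ < Real.sqrt 3 / 2 * ε →
        φ v ∈ Set.Ioo (-ε) ε ∧
        ∀ t ∈ Set.Ioo (-ε) ε,
          (x₀ + v + t • d₀ ∈ frontier Ω ↔ t = φ v) ∧
          (x₀ + v + t • d₀ ∈ Ω ↔ t < φ v) :=
  stmt_11_general ε hε Ω hΩ hball x₀ hx₀ d₀ hd₀ h1 h2
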